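/- arXiv:2202.05746 — 8 statements merged into one kernel-verified Lean document; each statement's English description precedes it below -/
import Mathlib

section
/- Let Q be a finite type with a colouring c : Q → Bool, and for a finset s ⊆ Q let g(s) = N_w(s) − N_b(s) ∈ ℤ. If α, β, γ ⊆ Q are finsets such that |α∩β∩γ| is even, then I^{g(α∩(β Δ γ))} = I^{g(α∩β)} · I^{g(α∩γ)}. Equivalently, I^{g(α∩(β Δ γ))} ≠ I^{g(α∩β)} · I^{g(α∩γ)} only if |α∩β∩γ| is odd. -/
/-- Number of white elements of a finset. -/
def Nw {Q : Type*} (c : Q → Bool) (s : Finset Q) : ℕ :=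
  (s.filter (fun q => c q = true)).card

/-- Number of black elements of a finset. -/
def Nb {Q : Type*} (c : Q → Bool) (s : Finset Q) : ℕ :=
  (s.filter (fun q => c q = false)).card

/-- g(s) = N_w(s) − N_b(s). -/
def gdiff {Q : Type*} (c : Q → Bool) (s : Finset Q) : ℤ :=
  (Nw c s : ℤ) - (Nb c s : ℤ)

lemma gdiff_eq_sum {Q : Type*} [DecidableEq Q] (c : Q → Bool) (s : Finset Q) :
    gdiff c s = ∑ q ∈ s, (if c q then (1 : ℤ) else -1) := by
  unfold gdiff Nw Nb
  rw [Finset.sum_ite, Finset.sum_const, Finset.sum_const]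
  simp [sub_eq_add_neg]

lemma gdiff_parity {Q : Type*} [DecidableEq Q] (c : Q → Bool) (s : Finset Q) :
    gdiff c s ≡ (s.card : ℤ) [ZMOD 2] := by
  unfold gdiff Nw Nb
  have : s.card = (s.filter (fun q => c q = true)).card
      + (s.filter (fun q => c q = false)).card := by
    rw [← Finset.card_filter_add_card_filter_not (p := fun q => c q = true)]
    congr 1
    simp
  rw [this]
  push_cast
  unfold Int.ModEq
  omega

lemma gdiff_symmDiff {Q : Type*} [DecidableEq Q] (c : Q → Bool) (A B : Finset Q) :
    gdiff c (symmDiff A B) = gdiff c A + gdiff c B - 2 * gdiff c (A ∩ B) := by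
  simp only [gdiff_eq_sum]
  have h1 : A = (A \ B) ∪ (A ∩ B) := by
    rw [Finset.sdiff_union_inter]
  have h2 : B = (B \ A) ∪ (A ∩ B) := by
    rw [Finset.inter_comm, Finset.sdiff_union_inter]
  have hs : symmDiff A B = (A \ B) ∪ (B \ A) := rfl
  rw [hs, Finset.sum_union, (by rw [Finset.sdiff_union_inter] :
      ∑ q ∈ A, (if c q then (1:ℤ) else -1) = ∑ q ∈ (A \ B) ∪ (A ∩ B), (if c q then (1:ℤ) else -1)),
    (by rw [Finset.inter_comm, Finset.sdiff_union_inter] :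
      ∑ q ∈ B, (if c q then (1:ℤ) else -1) = ∑ q ∈ (B \ A) ∪ (A ∩ B), (if c q then (1:ℤ) else -1)),
    Finset.sum_union, Finset.sum_union]
  · ring
  · exact Finset.sdiff_disjoint.mono_right Finset.inter_subset_left
  · exact Finset.sdiff_disjoint.mono_right Finset.inter_subset_right
  · exact disjoint_sdiff_sdiff

theorem stmt_1 {Q : Type*} [Fintype Q] [DecidableEq Q] (c : Q → Bool)
    (α β γ : Finset Q) (h : Even ((α ∩ β ∩ γ).card)) :
    Complex.I ^ (gdiff c (α ∩ (symmDiff β γ))) =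
      Complex.I ^ (gdiff c (α ∩ β)) * Complex.I ^ (gdiff c (α ∩ γ)) := by
  have hdist : α ∩ (symmDiff β γ) = symmDiff (α ∩ β) (α ∩ γ) := by
    ext x; simp [Finset.mem_symmDiff]; tauto
  have hinter : (α ∩ β) ∩ (α ∩ γ) = α ∩ β ∩ γ := by
    ext x; simp; tauto
  have heven : Even (gdiff c (α ∩ β ∩ γ)) := by
    have := gdiff_parity c (α ∩ β ∩ γ)
    obtain ⟨k, hk⟩ := h
    rw [Int.even_iff]
    have : gdiff c (α ∩ β ∩ γ) % 2 = ((α ∩ β ∩ γ).card : ℤ) % 2 := this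
    omega
  obtain ⟨k, hk⟩ := heven
  rw [hdist, gdiff_symmDiff, hinter, hk]
  have hI : Complex.I ≠ 0 := Complex.I_ne_zero
  rw [sub_eq_add_neg, zpow_add₀ hI, zpow_add₀ hI]
  have : Complex.I ^ (-(2 * (k + k))) = 1 := by
    rw [zpow_neg]
    have h4 : Complex.I ^ (4:ℤ) = 1 := by
      rw [show (4:ℤ) = ((4:ℕ):ℤ) by norm_num, zpow_natCast, Complex.I_pow_four]
    have : (2 : ℤ) * (k + k) = 4 * k := by ring
    rw [this, zpow_mul, h4, one_zpow, inv_one]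
  rw [this, mul_one]
end

section
/- Let Q be a finite type, α ⊆ Q a finset, and G₂, G₃ finite sets of finsets of Q, each containing ∅ and closed under symmetric difference. Define the vector v in the space of functions (Q → ZMod 2) × (Q → ZMod 2) → ℂ by v = Σ_{B ∈ G₂} Σ_{C ∈ G₃} (−1)^{|α∩B∩C|} · δ_{(χ_B, χ_C)}, where χ_s is the indicator bit string of a finset s and δ_x is the basis function supported at x. If β ∈ G₂ is such that |α∩β∩C| is even for every C ∈ G₃, then the translation operator sending each basis function δ_{(x,y)} to δ_{(x+χ_β, y)} fixes v. (This is the statement that, after a CZ_α error, stabilisers X_β not on the membrane boundary—and the product of all boundary generators—still have the codestate as a +1 eigenstate.) -/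
/-- Indicator bit string of a finset. -/
def chi {Q : Type*} [DecidableEq Q] (s : Finset Q) : Q → ZMod 2 :=
  fun q => if q ∈ s then 1 else 0

/-- The state obtained by applying the Clifford error CZ_α to the codestate of two
CSS codes with X stabiliser groups G₂ and G₃:
v = Σ_{B ∈ G₂} Σ_{C ∈ G₃} (−1)^{|α∩B∩C|} δ_{(χ_B, χ_C)}. -/
noncomputable def czState {Q : Type*} [DecidableEq Q] [Fintype Q] (α : Finset Q)
    (G₂ G₃ : Finset (Finset Q)) : ((Q → ZMod 2) × (Q → ZMod 2)) → ℂ :=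
  fun z => ∑ B ∈ G₂, ∑ C ∈ G₃,
    (-1 : ℂ) ^ ((α ∩ B ∩ C).card) * (if z = (chi B, chi C) then 1 else 0)

lemma chi_symmDiff {Q : Type*} [DecidableEq Q] (s t : Finset Q) :
    chi (symmDiff s t) = chi s + chi t := by
  funext q
  simp only [chi, Pi.add_apply, Finset.mem_symmDiff]
  by_cases hs : q ∈ s <;> by_cases ht : q ∈ t <;> simp [hs, ht] <;> decide

lemma card_symmDiff_add {Q : Type*} [DecidableEq Q] (X Y : Finset Q) :
    (symmDiff X Y).card + 2 * (X ∩ Y).card = X.card + Y.card := by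
  have h1 : symmDiff X Y = (X ∪ Y) \ (X ∩ Y) := by
    ext q; simp [Finset.mem_symmDiff]; tauto
  have h2 : (X ∩ Y) ⊆ X ∪ Y := (Finset.inter_subset_left).trans Finset.subset_union_left
  have h3 : (symmDiff X Y).card = (X ∪ Y).card - (X ∩ Y).card := by
    rw [h1, Finset.card_sdiff_of_subset h2]
  have h4 := Finset.card_union_add_card_inter X Y
  have h5 := Finset.card_le_card h2
  omega

lemma neg_one_pow_card_symmDiff {Q : Type*} [DecidableEq Q] (X Y : Finset Q) :
    ((-1 : ℂ)) ^ (symmDiff X Y).card = (-1) ^ X.card * (-1) ^ Y.card := by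
  have := congrArg (fun n : ℕ => ((-1 : ℂ)) ^ n) (card_symmDiff_add X Y)
  simpa [pow_add, pow_mul, neg_one_sq] using this

lemma add_chi_eq_iff {Q : Type*} [DecidableEq Q] (x u : Q → ZMod 2) (t : Finset Q) :
    x + chi t = u ↔ x = u + chi t := by
  constructor <;> rintro rfl <;> funext q <;>
    simp [add_assoc, CharTwo.add_self_eq_zero]

theorem stmt_5 {Q : Type*} [DecidableEq Q] [Fintype Q] (α : Finset Q)
    (G₂ G₃ : Finset (Finset Q))
    (h₂empty : ∅ ∈ G₂) (h₂closed : ∀ A ∈ G₂, ∀ B ∈ G₂, symmDiff A B ∈ G₂)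
    (h₃empty : ∅ ∈ G₃) (h₃closed : ∀ A ∈ G₃, ∀ B ∈ G₃, symmDiff A B ∈ G₃)
    (β : Finset Q) (hβ : β ∈ G₂)
    (heven : ∀ C ∈ G₃, Even ((α ∩ β ∩ C).card)) :
    (fun z : (Q → ZMod 2) × (Q → ZMod 2) =>
        czState α G₂ G₃ (z.1 + chi β, z.2)) = czState α G₂ G₃ := by
  funext z
  simp only [czState]
  refine Finset.sum_nbij' (i := fun B => symmDiff B β) (j := fun B => symmDiff B β)
    (fun B hB => h₂closed B hB β hβ) (fun B hB => h₂closed B hB β hβ)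
    (fun B _ => by simp) (fun B _ => by simp) ?_
  intro B hB
  refine Finset.sum_congr rfl fun C hC => ?_
  have hsign : ((-1 : ℂ)) ^ (α ∩ B ∩ C).card = (-1) ^ (α ∩ symmDiff B β ∩ C).card := by
    have hd : α ∩ symmDiff B β ∩ C = symmDiff (α ∩ B ∩ C) (α ∩ β ∩ C) := by
      ext q
      simp only [Finset.mem_inter, Finset.mem_symmDiff]
      tauto
    rw [hd, neg_one_pow_card_symmDiff, (heven C hC).neg_one_pow, mul_one]
  have hcond : ((z.1 + chi β, z.2) = (chi B, chi C)) ↔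
      (z = (chi (symmDiff B β), chi C)) := by
    rw [chi_symmDiff, Prod.ext_iff, Prod.ext_iff, add_chi_eq_iff]
  simp only [hsign, hcond]
end

section
/- Let Q be a finite type, α ⊆ Q a finset, and G₂, G₃ finite sets of finsets of Q, each containing ∅ and closed under symmetric difference. Define v : (Q → ZMod 2) × (Q → ZMod 2) → ℂ by v = Σ_{B ∈ G₂} Σ_{C ∈ G₃} (−1)^{|α∩B∩C|} · δ_{(χ_B, χ_C)}. If β ∈ G₂ is such that there exists C ∈ G₃ with |α∩β∩C| odd, then Σ_{x} conj(v(x)) · v(x + (χ_β, 0)) = 0; that is, v is orthogonal to its translate by χ_β in the first register, so a measurement of the stabiliser X_β on v returns ±1 with equal probability. -/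
lemma chi_injective {Q : Type*} [DecidableEq Q] : Function.Injective (chi (Q := Q)) := by
  intro s t h
  ext q
  have := congrFun h q
  unfold chi at this
  by_cases hs : q ∈ s <;> by_cases ht : q ∈ t <;> simp_all
lemma card_symmDiff_mod_two {Q : Type*} [DecidableEq Q] (s t : Finset Q) :
    (symmDiff s t).card % 2 = (s.card + t.card) % 2 := by
  have h1 : symmDiff s t = (s ∪ t) \ (s ∩ t) := by
    ext q; simp [Finset.mem_symmDiff]; tauto
  have h2 := Finset.card_union_add_card_inter s t
  have h3 : (s ∩ t) ⊆ (s ∪ t) := (Finset.inter_subset_left).trans Finset.subset_union_left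
  have h4 := Finset.card_sdiff_of_subset h3
  have h5 := Finset.card_le_card h3
  rw [h1, h4]
  omega
lemma neg_one_pow_mod {m n : ℕ} (h : m % 2 = n % 2) : ((-1 : ℂ)) ^ m = (-1) ^ n := by
  rcases Nat.even_or_odd m with hm | hm
  · have hn : Even n := by rcases hm with ⟨k,hk⟩; refine ⟨n/2, ?_⟩; omega
    rw [hm.neg_one_pow, hn.neg_one_pow]
  · have hn : Odd n := by rcases hm with ⟨k,hk⟩; refine ⟨n/2, ?_⟩; omega
    rw [hm.neg_one_pow, hn.neg_one_pow]
lemma char_sum_zero {Q : Type*} [DecidableEq Q] (s : Finset Q) (G : Finset (Finset Q))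
    (hclosed : ∀ A ∈ G, ∀ B ∈ G, symmDiff A B ∈ G)
    (C₀ : Finset Q) (hC₀ : C₀ ∈ G) (hodd : Odd ((s ∩ C₀).card)) :
    ∑ C ∈ G, ((-1 : ℂ)) ^ ((s ∩ C).card) = 0 := by
  have key : ∑ C ∈ G, ((-1 : ℂ)) ^ ((s ∩ C).card)
      = ∑ C ∈ G, ((-1 : ℂ)) ^ ((s ∩ symmDiff C₀ C).card) := by
    refine (Finset.sum_nbij' (fun C => symmDiff C₀ C) (fun C => symmDiff C₀ C) ?_ ?_ ?_ ?_ ?_).symm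
    · intro C hC; exact hclosed _ hC₀ _ hC
    · intro C hC; exact hclosed _ hC₀ _ hC
    · intro C hC; simp [symmDiff_symmDiff_cancel_left]
    · intro C hC; simp [symmDiff_symmDiff_cancel_left]
    · intro C hC; rfl
  have step : ∀ C : Finset Q, ((-1 : ℂ)) ^ ((s ∩ symmDiff C₀ C).card)
      = -((-1 : ℂ)) ^ ((s ∩ C).card) := by
    intro C
    have hd : s ∩ symmDiff C₀ C = symmDiff (s ∩ C₀) (s ∩ C) := inf_symmDiff_distrib_left s C₀ C
    have hp := card_symmDiff_mod_two (s ∩ C₀) (s ∩ C)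
    rw [hd, neg_one_pow_mod hp, pow_add, hodd.neg_one_pow]
    ring
  rw [Finset.sum_congr rfl (fun C _ => step C), Finset.sum_neg_distrib] at key
  exact add_self_eq_zero.mp (by linear_combination key)
lemma czState_chi {Q : Type*} [DecidableEq Q] [Fintype Q] (α : Finset Q)
    (G₂ G₃ : Finset (Finset Q)) (D E : Finset Q) :
    czState α G₂ G₃ (chi D, chi E)
      = if D ∈ G₂ ∧ E ∈ G₃ then (-1 : ℂ) ^ ((α ∩ D ∩ E).card) else 0 := by
  unfold czState
  have heq : ∀ B C : Finset Q, ((chi D, chi E) = (chi (Q := Q) B, chi C)) ↔ (B = D ∧ C = E) := by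
    intro B C
    constructor
    · intro h
      obtain ⟨h1, h2⟩ := Prod.mk.injEq .. ▸ h
      exact ⟨(chi_injective h1).symm, (chi_injective h2).symm⟩
    · rintro ⟨rfl, rfl⟩; rfl
  simp only [heq]
  simp only [ite_and, mul_ite, mul_one, mul_zero]
  have hstep : ∀ B ∈ G₂, (∑ C ∈ G₃, if B = D then if C = E then
        ((-1 : ℂ)) ^ ((α ∩ B ∩ C).card) else 0 else 0)
      = if B = D then (if E ∈ G₃ then ((-1 : ℂ)) ^ ((α ∩ B ∩ E).card) else 0) else 0 := by
    intro B _
    by_cases h : B = D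
    · subst h; simp only [if_true]; rw [Finset.sum_ite_eq' G₃ E]
    · simp [h]
  rw [Finset.sum_congr rfl hstep, Finset.sum_ite_eq' G₂ D]
lemma czState_real {Q : Type*} [DecidableEq Q] [Fintype Q] (α : Finset Q)
    (G₂ G₃ : Finset (Finset Q)) (x : (Q → ZMod 2) × (Q → ZMod 2)) :
    (starRingEnd ℂ) (czState α G₂ G₃ x) = czState α G₂ G₃ x := by
  unfold czState
  rw [map_sum]
  refine Finset.sum_congr rfl fun B _ => ?_
  rw [map_sum]
  refine Finset.sum_congr rfl fun C _ => ?_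
  rw [map_mul, map_pow, map_neg, map_one, apply_ite (starRingEnd ℂ), map_one, map_zero]

theorem stmt_6 {Q : Type*} [DecidableEq Q] [Fintype Q] (α : Finset Q)
    (G₂ G₃ : Finset (Finset Q))
    (h₂empty : ∅ ∈ G₂) (h₂closed : ∀ A ∈ G₂, ∀ B ∈ G₂, symmDiff A B ∈ G₂)
    (h₃empty : ∅ ∈ G₃) (h₃closed : ∀ A ∈ G₃, ∀ B ∈ G₃, symmDiff A B ∈ G₃)
    (β : Finset Q) (hβ : β ∈ G₂)
    (hodd : ∃ C ∈ G₃, Odd ((α ∩ β ∩ C).card)) :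
    ∑ x : (Q → ZMod 2) × (Q → ZMod 2),
      (starRingEnd ℂ) (czState α G₂ G₃ x) * czState α G₂ G₃ (x.1 + chi β, x.2) = 0 := by
  obtain ⟨C₀, hC₀, hoddC⟩ := hodd
  set g : ((Q → ZMod 2) × (Q → ZMod 2)) → ℂ :=
    fun x => czState α G₂ G₃ (x.1 + chi β, x.2) with hg
  have step1 : ∑ x : (Q → ZMod 2) × (Q → ZMod 2),
      (starRingEnd ℂ) (czState α G₂ G₃ x) * g x
      = ∑ B ∈ G₂, ∑ C ∈ G₃, (-1 : ℂ) ^ ((α ∩ B ∩ C).card) * g (chi B, chi C) := by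
    simp only [czState_real]
    have expand : ∀ x : (Q → ZMod 2) × (Q → ZMod 2), czState α G₂ G₃ x * g x
        = ∑ B ∈ G₂, ∑ C ∈ G₃,
          (-1 : ℂ) ^ ((α ∩ B ∩ C).card) * (if x = (chi B, chi C) then 1 else 0) * g x := by
      intro x
      rw [czState, Finset.sum_mul]
      exact Finset.sum_congr rfl fun B _ => Finset.sum_mul _ _ _
    rw [Finset.sum_congr rfl fun x _ => expand x, Finset.sum_comm]
    refine Finset.sum_congr rfl fun B _ => ?_
    rw [Finset.sum_comm]
    refine Finset.sum_congr rfl fun C _ => ?_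
    simp only [mul_ite, ite_mul, mul_one, mul_zero, zero_mul]
    exact Fintype.sum_ite_eq' (chi B, chi C) (fun x => (-1 : ℂ) ^ ((α ∩ B ∩ C).card) * g x)
  rw [step1]
  have step2 : ∀ B ∈ G₂, ∀ C ∈ G₃,
      (-1 : ℂ) ^ ((α ∩ B ∩ C).card) * g (chi B, chi C)
      = (-1 : ℂ) ^ ((α ∩ β ∩ C).card) := by
    intro B hB C hC
    have h1 : (chi B + chi β, chi C) = (chi (symmDiff B β), chi (Q := Q) C) := by
      rw [chi_symmDiff]
    rw [hg]
    simp only [h1]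
    rw [czState_chi]
    rw [if_pos ⟨h₂closed B hB β hβ, hC⟩]
    have hset : α ∩ symmDiff B β ∩ C = symmDiff (α ∩ B ∩ C) (α ∩ β ∩ C) := by
      rw [show α ∩ symmDiff B β = symmDiff (α ∩ B) (α ∩ β) from
        inf_symmDiff_distrib_left α B β]
      exact inf_symmDiff_distrib_right (α ∩ B) (α ∩ β) C
    have hpar := card_symmDiff_mod_two (α ∩ B ∩ C) (α ∩ β ∩ C)
    rw [hset, ← pow_add]
    exact neg_one_pow_mod (by omega)
  calc ∑ B ∈ G₂, ∑ C ∈ G₃, (-1 : ℂ) ^ ((α ∩ B ∩ C).card) * g (chi B, chi C)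
      = ∑ B ∈ G₂, ∑ C ∈ G₃, (-1 : ℂ) ^ ((α ∩ β ∩ C).card) :=
        Finset.sum_congr rfl fun B hB => Finset.sum_congr rfl fun C hC => step2 B hB C hC
    _ = ∑ B ∈ G₂, (0 : ℂ) := Finset.sum_congr rfl fun B _ =>
        char_sum_zero (α ∩ β) G₃ h₃closed C₀ hC₀ hoddC
    _ = 0 := Finset.sum_const_zero
end

section
/- Let Q be a finite type with a colouring c : Q → Bool, g(s) = N_w(s) − N_b(s) for finsets s ⊆ Q, α ⊆ Q a finset, and G a finite set of finsets of Q containing ∅ and closed under symmetric difference. Define v : (Q → ZMod 2) → ℂ by v = Σ_{B ∈ G} I^{g(α∩B)} · δ_{χ_B}. If β ∈ G satisfies I^{g(α∩β)} = −1 and |α∩β∩B| is even for every B ∈ G, then the translation operator sending each δ_x to δ_{x+χ_β} sends v to −v. (In the 3D colour code with two linked error membranes, the product of all boundary stabiliser generators of one colour has the state as a −1 eigenstate, giving an odd parity of −1 outcomes: the linking charge.) -/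
/-- The state A_α|0̄⟩ obtained by applying the S/S† error pattern on α to the
colour-code codestate with X stabiliser group G:
v = Σ_{B ∈ G} I^{g(α∩B)} δ_{χ_B}. -/
noncomputable def sState {Q : Type*} [DecidableEq Q] [Fintype Q] (c : Q → Bool)
    (α : Finset Q) (G : Finset (Finset Q)) : (Q → ZMod 2) → ℂ :=
  fun x => ∑ B ∈ G,
    Complex.I ^ (gdiff c (α ∩ B)) * (if x = chi B then 1 else 0)

open Finset
open scoped symmDiff

lemma I_zpow_gdiff_eq_prod {Q : Type*} (c : Q → Bool) (s : Finset Q) :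
    Complex.I ^ gdiff c s = ∏ q ∈ s, if c q then Complex.I else -Complex.I := by
  rw [prod_ite, prod_const, prod_const, gdiff, Nw, Nb, zpow_sub₀ Complex.I_ne_zero,
    zpow_natCast, zpow_natCast, div_eq_mul_inv, ← inv_pow, Complex.inv_I]
  simp

section

variable {Q : Type*} [DecidableEq Q]

lemma chi_symmDiff_s8 (A B : Finset Q) : chi (A ∆ B) = chi A + chi B := by
  funext q
  by_cases hA : q ∈ A <;> by_cases hB : q ∈ B <;> 
    simp [chi, mem_symmDiff, hA, hB, CharTwo.add_self_eq_zero]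

lemma I_zpow_gdiff_symmDiff (c : Q → Bool) (A B : Finset Q) :
    Complex.I ^ gdiff c (A ∆ B) * (-1) ^ #(A ∩ B) =
      Complex.I ^ gdiff c A * Complex.I ^ gdiff c B := by
  set ω : Q → ℂ := fun q => if c q then Complex.I else -Complex.I
  have hω : ∀ q, ω q ^ 2 = -1 := fun q => by by_cases h : c q <;> simp [ω, h]
  have hsq : (-1 : ℂ) ^ #(A ∩ B) = (∏ q ∈ A ∩ B, ω q) * ∏ q ∈ A ∩ B, ω q := by
    rw [← prod_mul_distrib, ← prod_const]
    exact prod_congr rfl fun q _ => by rw [← hω q, sq]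
  simp only [I_zpow_gdiff_eq_prod, hsq]
  rw [← mul_assoc, symmDiff_eq_sup_sdiff_inf, sup_eq_union, inf_eq_inter,
    prod_sdiff inter_subset_union, prod_union_inter]

lemma sum_comp_symmDiff_right {M : Type*} [AddCommMonoid M] {G : Finset (Finset Q)}
    (h_closed : ∀ A ∈ G, ∀ B ∈ G, A ∆ B ∈ G) {β : Finset Q} (hβ : β ∈ G)
    (f : Finset Q → M) : ∑ B ∈ G, f (B ∆ β) = ∑ B ∈ G, f B :=
  sum_nbij' (· ∆ β) (· ∆ β) (fun B hB => h_closed B hB β hβ) (fun B hB => h_closed B hB β hβ)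
    (fun B _ => symmDiff_symmDiff_cancel_right β B) (fun B _ => symmDiff_symmDiff_cancel_right β B)
    fun _ _ => rfl

lemma sState_add_chi [Fintype Q] (c : Q → Bool) (α : Finset Q) {G : Finset (Finset Q)}
    (h_closed : ∀ A ∈ G, ∀ B ∈ G, A ∆ B ∈ G) {β : Finset Q} (hβ : β ∈ G) (x : Q → ZMod 2) :
    sState c α G (x + chi β) =
      ∑ B ∈ G, Complex.I ^ gdiff c (α ∩ B ∆ β) * if x = chi B then 1 else 0 := by
  rw [sState, ← sum_comp_symmDiff_right h_closed hβ]
  refine sum_congr rfl fun B _ => ?_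
  simp only [chi_symmDiff_s8, add_left_inj]

end

theorem stmt_8_general {Q : Type*} [DecidableEq Q] [Fintype Q] (c : Q → Bool)
    (α : Finset Q) (G : Finset (Finset Q))
    (h_closed : ∀ A ∈ G, ∀ B ∈ G, symmDiff A B ∈ G)
    (β : Finset Q) (hβ : β ∈ G)
    (hphase : Complex.I ^ (gdiff c (α ∩ β)) = -1)
    (heven : ∀ B ∈ G, Even ((α ∩ β ∩ B).card)) :
    (fun x : Q → ZMod 2 => sState c α G (x + chi β)) = -sState c α G := by
  funext x
  rw [sState_add_chi c α h_closed hβ, Pi.neg_apply, sState, ← sum_neg_distrib]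
  refine sum_congr rfl fun B hB => ?_
  have hflip : Complex.I ^ gdiff c (α ∩ B ∆ β) = -Complex.I ^ gdiff c (α ∩ B) := by
    rw [show α ∩ B ∆ β = (α ∩ B) ∆ (α ∩ β) from inf_symmDiff_distrib_left α B β]
    have h := I_zpow_gdiff_symmDiff c (α ∩ B) (α ∩ β)
    rwa [← inter_inter_distrib_left, inter_comm B, ← inter_assoc, (heven B hB).neg_one_pow,
      mul_one, hphase, mul_neg_one] at h
  rw [hflip, neg_mul]

theorem stmt_8 {Q : Type*} [DecidableEq Q] [Fintype Q] (c : Q → Bool)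
    (α : Finset Q) (G : Finset (Finset Q))
    (h_empty : ∅ ∈ G) (h_closed : ∀ A ∈ G, ∀ B ∈ G, symmDiff A B ∈ G)
    (β : Finset Q) (hβ : β ∈ G)
    (hphase : Complex.I ^ (gdiff c (α ∩ β)) = -1)
    (heven : ∀ B ∈ G, Even ((α ∩ β ∩ B).card)) :
    (fun x : Q → ZMod 2 => sState c α G (x + chi β)) = -sState c α G :=
  stmt_8_general c α G h_closed β hβ hphase heven
end

section
/- Let Q be a finite type and let H₄ be the complex vector space of functions (Q → ZMod 2)⁴ → ℂ. For all finsets α, β, γ ⊆ Q, the transversal CCCZ gate satisfies the operator identity CCCZ_Q ∘ X_α^{(1)} ∘ X_β^{(2)} ∘ X_γ^{(3)} = X_α^{(1)} ∘ X_β^{(2)} ∘ X_γ^{(3)} ∘ Z_{α∩β∩γ}^{(4)} ∘ CZ_{α∩β}^{(3,4)} ∘ CZ_{α∩γ}^{(2,4)} ∘ CZ_{β∩γ}^{(1,4)} ∘ CCZ_α^{(2,3,4)} ∘ CCZ_β^{(1,3,4)} ∘ CCZ_γ^{(1,2,4)} ∘ CCCZ_Q as linear maps on H₄: in particular a Z linking-charge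 string appears on register 4 supported on the triple intersection α∩β∩γ. -/
/-- The four-register state space: complex functions on (Q → ZMod 2)⁴. -/
abbrev H4 (Q : Type*) : Type _ :=
  ((Q → ZMod 2) × (Q → ZMod 2) × (Q → ZMod 2) × (Q → ZMod 2)) → ℂ

/-- Pauli X on register 1 at the positions in α. -/
def X1 {Q : Type*} [DecidableEq Q] (α : Finset Q) (f : H4 Q) : H4 Q :=
  fun v => f (v.1 + chi α, v.2.1, v.2.2.1, v.2.2.2)

/-- Pauli X on register 2 at the positions in α. -/
def X2 {Q : Type*} [DecidableEq Q] (α : Finset Q) (f : H4 Q) : H4 Q :=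
  fun v => f (v.1, v.2.1 + chi α, v.2.2.1, v.2.2.2)

/-- Pauli X on register 3 at the positions in α. -/
def X3 {Q : Type*} [DecidableEq Q] (α : Finset Q) (f : H4 Q) : H4 Q :=
  fun v => f (v.1, v.2.1, v.2.2.1 + chi α, v.2.2.2)

/-- Pauli Z on register 4 at the positions in α. -/
def Z4 {Q : Type*} (α : Finset Q) (f : H4 Q) : H4 Q :=
  fun v => (-1 : ℂ) ^ ((α.filter (fun q => v.2.2.2 q = 1)).card) * f v

/-- Controlled-Z between registers 3 and 4 on the positions in α. -/
def CZ34 {Q : Type*} (α : Finset Q) (f : H4 Q) : H4 Q :=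
  fun v => (-1 : ℂ) ^ ((α.filter (fun q => v.2.2.1 q = 1 ∧ v.2.2.2 q = 1)).card) * f v

/-- Controlled-Z between registers 2 and 4 on the positions in α. -/
def CZ24 {Q : Type*} (α : Finset Q) (f : H4 Q) : H4 Q :=
  fun v => (-1 : ℂ) ^ ((α.filter (fun q => v.2.1 q = 1 ∧ v.2.2.2 q = 1)).card) * f v

/-- Controlled-Z between registers 1 and 4 on the positions in α. -/
def CZ14 {Q : Type*} (α : Finset Q) (f : H4 Q) : H4 Q :=
  fun v => (-1 : ℂ) ^ ((α.filter (fun q => v.1 q = 1 ∧ v.2.2.2 q = 1)).card) * f v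

/-- Doubly-controlled-Z between registers 2, 3 and 4 on the positions in α. -/
def CCZ234 {Q : Type*} (α : Finset Q) (f : H4 Q) : H4 Q :=
  fun v => (-1 : ℂ) ^
    ((α.filter (fun q => v.2.1 q = 1 ∧ v.2.2.1 q = 1 ∧ v.2.2.2 q = 1)).card) * f v

/-- Doubly-controlled-Z between registers 1, 3 and 4 on the positions in α. -/
def CCZ134 {Q : Type*} (α : Finset Q) (f : H4 Q) : H4 Q :=
  fun v => (-1 : ℂ) ^
    ((α.filter (fun q => v.1 q = 1 ∧ v.2.2.1 q = 1 ∧ v.2.2.2 q = 1)).card) * f v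

/-- Doubly-controlled-Z between registers 1, 2 and 4 on the positions in α. -/
def CCZ124 {Q : Type*} (α : Finset Q) (f : H4 Q) : H4 Q :=
  fun v => (-1 : ℂ) ^
    ((α.filter (fun q => v.1 q = 1 ∧ v.2.1 q = 1 ∧ v.2.2.2 q = 1)).card) * f v

/-- Triply-controlled-Z on the positions in α. -/
def CCCZ {Q : Type*} (α : Finset Q) (f : H4 Q) : H4 Q :=
  fun v => (-1 : ℂ) ^
    ((α.filter (fun q =>
      v.1 q = 1 ∧ v.2.1 q = 1 ∧ v.2.2.1 q = 1 ∧ v.2.2.2 q = 1)).card) * f v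

lemma neg_one_pow_eq_of_natCast_eq {R : Type*} [Monoid R] [HasDistribNeg R] {m n : ℕ}
    (h : (m : ZMod 2) = n) : (-1 : R) ^ m = (-1) ^ n :=
  neg_one_pow_congr <| by rw [← ZMod.natCast_eq_zero_iff_even, h, ZMod.natCast_eq_zero_iff_even]

lemma ZMod.mul_eq_one_iff_of_two (a b : ZMod 2) : a * b = 1 ↔ a = 1 ∧ b = 1 := by
  decide +revert

lemma ZMod.ite_eq_one_of_two (a : ZMod 2) : (if a = 1 then (1 : ZMod 2) else 0) = a := by
  decide +revert

lemma chi_univ {Q : Type*} [DecidableEq Q] [Fintype Q] (q : Q) : chi Finset.univ q = 1 :=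
  if_pos (Finset.mem_univ q)

lemma chi_inter {Q : Type*} [DecidableEq Q] (s t : Finset Q) (q : Q) :
    chi (s ∩ t) q = chi s q * chi t q := by
  by_cases hs : q ∈ s <;> by_cases ht : q ∈ t <;> simp [chi, hs, ht]

lemma natCast_card_filter_eq_sum_chi_mul {Q : Type*} [DecidableEq Q] [Fintype Q]
    (s : Finset Q) (x : Q → ZMod 2) :
    ((s.filter fun q => x q = 1).card : ZMod 2) = ∑ q, chi s q * x q := by
  rw [Finset.natCast_card_filter, ← Finset.sum_ite_mem_eq]
  simp only [ZMod.ite_eq_one_of_two, chi, ite_mul, one_mul, zero_mul]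

lemma mul_mul_mul_eq_of_charTwo {R : Type*} [CommRing R] [CharP R 2] (a b c x y z : R) :
    a * b * c = (a + x) * (b + y) * (c + z) + x * (b + y) * (c + z) + y * (a + x) * (c + z) +
      z * (a + x) * (b + y) + x * y * (c + z) + x * z * (b + y) + y * z * (a + x) + x * y * z := by
  linear_combination
    (-(x * (b + y) * (c + z) + y * (a + x) * (c + z) + z * (a + x) * (b + y) + x * y * z)) *
      CharTwo.two_eq_zero (R := R)

theorem stmt_13 {Q : Type*} [DecidableEq Q] [Fintype Q] (α β γ : Finset Q) :
    CCCZ (Finset.univ : Finset Q) ∘ X1 α ∘ X2 β ∘ X3 γ =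
      X1 α ∘ X2 β ∘ X3 γ ∘ Z4 (α ∩ β ∩ γ) ∘
        CZ34 (α ∩ β) ∘ CZ24 (α ∩ γ) ∘ CZ14 (β ∩ γ) ∘
        CCZ234 α ∘ CCZ134 β ∘ CCZ124 γ ∘
        CCCZ (Finset.univ : Finset Q) := by
  funext f v
  simp only [Function.comp_apply, X1, X2, X3, Z4, CZ34, CZ24, CZ14, CCZ234, CCZ134, CCZ124, CCCZ,
    ← mul_assoc, ← pow_add]
  congr 1
  apply neg_one_pow_eq_of_natCast_eq
  push_cast
  simp only [← ZMod.mul_eq_one_iff_of_two, natCast_card_filter_eq_sum_chi_mul,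
    ← Finset.sum_add_distrib]
  refine Finset.sum_congr rfl fun q _ => ?_
  simp only [chi_univ, chi_inter, Pi.add_apply]
  linear_combination v.2.2.2 q *
    mul_mul_mul_eq_of_charTwo (v.1 q) (v.2.1 q) (v.2.2.1 q) (chi α q) (chi β q) (chi γ q)
end

section
/- Let Q be a finite type with a colouring c : Q → Bool, and let H₁ be the complex vector space of functions (Q → ZMod 2) → ℂ. For every finset α ⊆ Q, the transversal T gate satisfies the operator identity T_Q ∘ X_α = exp(−iπ(N_w(α) − N_b(α))/4) • (A_α ∘ X_α ∘ T_Q) as linear maps on H₁. -/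
/-- The one-register state space: complex functions on Q → ZMod 2. -/
abbrev H1 (Q : Type*) : Type _ := (Q → ZMod 2) → ℂ

/-- Pauli X at the positions in α. -/
def Xop {Q : Type*} [DecidableEq Q] (α : Finset Q) (f : H1 Q) : H1 Q :=
  fun x => f (x + chi α)

/-- Pauli Z at the positions in α. -/
def Zop {Q : Type*} (α : Finset Q) (f : H1 Q) : H1 Q :=
  fun x => (-1 : ℂ) ^ ((α.filter (fun q => x q = 1)).card) * f x

/-- The S/S† error pattern on α: the diagonal operator applying S on white
qubits of α and S† on black qubits of α. -/
def Aop {Q : Type*} (c : Q → Bool) (α : Finset Q) (f : H1 Q) : H1 Q :=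
  fun x =>
    Complex.I ^ ((α.filter (fun q => x q = 1 ∧ c q = true)).card) *
    (-Complex.I) ^ ((α.filter (fun q => x q = 1 ∧ c q = false)).card) * f x

/-- The T/T† pattern on α: the diagonal operator applying T on white qubits
of α and T† on black qubits of α, multiplying δ_x by exp(iπ(w−b)/4). -/
noncomputable def Tgate {Q : Type*} (c : Q → Bool) (α : Finset Q) (f : H1 Q) : H1 Q :=
  fun x =>
    Complex.exp ((Real.pi : ℂ) * Complex.I *
      (((α.filter (fun q => x q = 1 ∧ c q = true)).card : ℂ) -
        ((α.filter (fun q => x q = 1 ∧ c q = false)).card : ℂ)) / 4) * f x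


lemma flip_count {Q : Type*} [DecidableEq Q] [Fintype Q] (x : Q → ZMod 2) (α : Finset Q)
    (P : Q → Prop) [DecidablePred P] :
    (Finset.univ.filter (fun q => (x + chi α) q = 1 ∧ P q)).card
      + 2 * (α.filter (fun q => x q = 1 ∧ P q)).card
    = (Finset.univ.filter (fun q => x q = 1 ∧ P q)).card + (α.filter P).card := by
  have h1 : α.filter (fun q => x q = 1 ∧ P q)
      = Finset.univ.filter (fun q => q ∈ α ∧ (x q = 1 ∧ P q)) := by ext q; simp
  have h2 : α.filter P = Finset.univ.filter (fun q => q ∈ α ∧ P q) := by ext q; simp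
  rw [h1, h2, Finset.card_filter, Finset.card_filter, Finset.card_filter,
    Finset.card_filter, Finset.mul_sum, ← Finset.sum_add_distrib, ← Finset.sum_add_distrib]
  refine Finset.sum_congr rfl fun q _ => ?_
  have hx : x q = 0 ∨ x q = 1 := by
    have : ∀ a : ZMod 2, a = 0 ∨ a = 1 := by decide
    exact this _
  by_cases hq : q ∈ α <;> by_cases hP : P q <;>
    rcases hx with hx | hx <;>
    simp [chi, Pi.add_apply, hq, hP, hx]

lemma I_eq_exp : Complex.I = Complex.exp ((Real.pi : ℂ) * Complex.I / 2) := by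
  have : (Real.pi : ℂ) * Complex.I / 2 = ((Real.pi / 2 : ℝ) : ℂ) * Complex.I := by
    push_cast; ring
  rw [this, Complex.exp_mul_I, ← Complex.ofReal_cos, ← Complex.ofReal_sin]
  norm_num [Real.cos_pi_div_two, Real.sin_pi_div_two]

lemma neg_I_eq_exp : -Complex.I = Complex.exp (-((Real.pi : ℂ) * Complex.I / 2)) := by
  rw [Complex.exp_neg, ← I_eq_exp, Complex.inv_I]

theorem stmt_15 {Q : Type*} [DecidableEq Q] [Fintype Q] (c : Q → Bool)
    (α : Finset Q) :
    Tgate c (Finset.univ : Finset Q) ∘ Xop α =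
      Complex.exp (-((Real.pi : ℂ) * Complex.I *
          ((Nw c α : ℂ) - (Nb c α : ℂ)) / 4)) •
        (Aop c α ∘ Xop α ∘ Tgate c (Finset.univ : Finset Q)) := by
  funext f x
  simp only [Function.comp_apply, Pi.smul_apply, smul_eq_mul, Tgate, Xop, Aop]
  set W := (Finset.univ.filter (fun q => x q = 1 ∧ c q = true)).card with hW
  set B := (Finset.univ.filter (fun q => x q = 1 ∧ c q = false)).card with hB
  set W' := (Finset.univ.filter (fun q => (x + chi α) q = 1 ∧ c q = true)).card with hW'
  set B' := (Finset.univ.filter (fun q => (x + chi α) q = 1 ∧ c q = false)).card with hB'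
  set w := (α.filter (fun q => x q = 1 ∧ c q = true)).card with hw
  set b := (α.filter (fun q => x q = 1 ∧ c q = false)).card with hb
  have kw : W' + 2 * w = W + Nw c α := flip_count x α _
  have kb : B' + 2 * b = B + Nb c α := flip_count x α _
  have kwC : (W' : ℂ) + 2 * w = W + Nw c α := by exact_mod_cast congrArg (Nat.cast (R := ℂ)) kw
  have kbC : (B' : ℂ) + 2 * b = B + Nb c α := by exact_mod_cast congrArg (Nat.cast (R := ℂ)) kb
  have pw : Complex.I ^ w = Complex.exp (w * ((Real.pi : ℂ) * Complex.I / 2)) := by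
    rw [Complex.exp_nat_mul, ← I_eq_exp]
  have pb : (-Complex.I) ^ b = Complex.exp (b * (-((Real.pi : ℂ) * Complex.I / 2))) := by
    rw [Complex.exp_nat_mul, ← neg_I_eq_exp]
  rw [pw, pb, ← Complex.exp_add, ← mul_assoc, ← Complex.exp_add, ← mul_assoc, ← Complex.exp_add]
  congr 2
  linear_combination (-(Real.pi * Complex.I / 4)) * kwC + (Real.pi * Complex.I / 4) * kbC
end

section
/- Let Q be a finite type with a colouring c : Q → Bool, and let H₁ be the complex vector space of functions (Q → ZMod 2) → ℂ. If α ⊆ Q is a finset with N_w(α) = N_b(α) (equal numbers of white and black elements, as holds when X_α is an error membrane supported on a set of faces of the 3D colour code), then the transversal T gate satisfies T_Q ∘ X_α = X_α ∘ Z_α ∘ A_α ∘ T_Q as linear maps on H₁, with no residual scalar phase. -/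
lemma pow_filter_card {Q : Type*} (s : Finset Q) (p : Q → Prop) [DecidablePred p]
    (r : ℂ) : r ^ (s.filter p).card = ∏ q ∈ s, if p q then r else 1 := by
  rw [Finset.prod_ite, Finset.prod_const, Finset.prod_const_one, mul_one]

lemma tphase_prod {Q : Type*} (c : Q → Bool) (s : Finset Q) (x : Q → ZMod 2) :
    Complex.exp ((Real.pi : ℂ) * Complex.I *
      (((s.filter (fun q => x q = 1 ∧ c q = true)).card : ℂ) -
        ((s.filter (fun q => x q = 1 ∧ c q = false)).card : ℂ)) / 4) =
    ∏ q ∈ s, (if x q = 1 then (if c q = true then Complex.exp ((Real.pi : ℂ) * Complex.I / 4)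
        else (Complex.exp ((Real.pi : ℂ) * Complex.I / 4))⁻¹) else 1) := by
  have harg : (Real.pi : ℂ) * Complex.I *
      (((s.filter (fun q => x q = 1 ∧ c q = true)).card : ℂ) -
        ((s.filter (fun q => x q = 1 ∧ c q = false)).card : ℂ)) / 4
      = ((s.filter (fun q => x q = 1 ∧ c q = true)).card : ℂ) *
          ((Real.pi : ℂ) * Complex.I / 4) -
        ((s.filter (fun q => x q = 1 ∧ c q = false)).card : ℂ) *
          ((Real.pi : ℂ) * Complex.I / 4) := by ring
  rw [harg, Complex.exp_sub, Complex.exp_nat_mul, Complex.exp_nat_mul,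
    div_eq_mul_inv, ← inv_pow,
    pow_filter_card s _ (Complex.exp ((Real.pi : ℂ) * Complex.I / 4)),
    pow_filter_card s _ (Complex.exp ((Real.pi : ℂ) * Complex.I / 4))⁻¹,
    ← Finset.prod_mul_distrib]
  apply Finset.prod_congr rfl
  intro q _
  by_cases h1 : x q = 1 <;> cases hc : c q <;> simp [h1, hc]

theorem stmt_16 {Q : Type*} [DecidableEq Q] [Fintype Q] (c : Q → Bool)
    (α : Finset Q) (h : Nw c α = Nb c α) :
    Tgate c (Finset.univ : Finset Q) ∘ Xop α =
      Xop α ∘ Zop α ∘ Aop c α ∘ Tgate c (Finset.univ : Finset Q) := by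
  funext f x
  simp only [Function.comp_apply, Tgate, Xop, Zop, Aop]
  set y := x + chi α with hy
  rw [tphase_prod c Finset.univ x, tphase_prod c Finset.univ y,
    pow_filter_card α (fun q => y q = 1) (-1 : ℂ),
    pow_filter_card α (fun q => y q = 1 ∧ c q = true) Complex.I,
    pow_filter_card α (fun q => y q = 1 ∧ c q = false) (-Complex.I)]
  set ω := Complex.exp ((Real.pi : ℂ) * Complex.I / 4) with hω
  have hω0 : ω ≠ 0 := Complex.exp_ne_zero _
  have hωI : ω * ω = Complex.I := by
    rw [hω, ← Complex.exp_add]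
    have harg : (Real.pi : ℂ) * Complex.I / 4 + (Real.pi : ℂ) * Complex.I / 4
        = ((Real.pi : ℂ) / 2) * Complex.I := by ring
    rw [harg, Complex.exp_mul_I, Complex.cos_pi_div_two, Complex.sin_pi_div_two,
      one_mul, zero_add]
  have hinv : ω * ω⁻¹ = 1 := mul_inv_cancel₀ hω0
  have hzmod : ∀ a : ZMod 2, a = 0 ∨ a = 1 := by decide
  have hsplit : ∀ q ∈ (Finset.univ : Finset Q),
      (if x q = 1 then if c q = true then ω else ω⁻¹ else 1)
      = ((if q ∈ α then (if y q = 1 then (-1 : ℂ) else 1) else 1) *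
         (if q ∈ α then (if y q = 1 ∧ c q = true then Complex.I else 1) else 1) *
         (if q ∈ α then (if y q = 1 ∧ c q = false then -Complex.I else 1) else 1) *
         (if y q = 1 then if c q = true then ω else ω⁻¹ else 1)) *
        (if q ∈ α then (if c q = true then ω else ω⁻¹) else 1) := by
    intro q _
    have hyq : y q = x q + (if q ∈ α then 1 else 0) := rfl
    by_cases hq : q ∈ α
    · rcases hzmod (x q) with hx | hx
      · have hy1 : y q = 1 := by rw [hyq, hx, if_pos hq]; decide
        cases hc : c q
        · simp only [hx, hy1, hq, hc, if_true, if_pos, and_true, and_false, if_false,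
            Bool.false_eq_true, one_mul, mul_one]
          simp only [show ((0 : ZMod 2) = 1) = False by simp, if_false]
          linear_combination (-(ω * ω⁻¹ + 1)) * hinv + (ω⁻¹ * ω⁻¹) * hωI
        · simp only [hx, hy1, hq, hc, if_true, if_pos, and_true, and_false, if_false,
            Bool.true_eq_false, one_mul, mul_one]
          simp only [show ((0 : ZMod 2) = 1) = False by simp, if_false]
          linear_combination Complex.I * hωI + Complex.I_mul_I
      · have hy0 : y q = 0 := by rw [hyq, hx, if_pos hq]; decide
        have hy1 : ¬(y q = 1) := by rw [hy0]; decide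
        cases hc : c q <;>
          simp [hx, hy0, hy1, hq, hc]
    · have hy0 : y q = x q := by rw [hyq, if_neg hq]; ring
      simp [hq, hy0]
  have hu : (∏ q ∈ (Finset.univ : Finset Q),
      (if q ∈ α then (if c q = true then ω else ω⁻¹) else 1)) = 1 := by
    rw [Finset.prod_ite_mem, Finset.univ_inter, Finset.prod_ite,
      Finset.prod_const, Finset.prod_const]
    have hfn : α.filter (fun q => ¬(c q = true)) = α.filter (fun q => c q = false) := by
      apply Finset.filter_congr; intro q _; simp
    have h' : (α.filter (fun q => c q = true)).card
        = (α.filter (fun q => ¬(c q = true))).card := by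
      rw [hfn]; exact h
    rw [← h', ← mul_pow, hinv, one_pow]
  have key : (∏ q ∈ (Finset.univ : Finset Q),
        (if x q = 1 then if c q = true then ω else ω⁻¹ else 1))
      = (∏ q ∈ α, if y q = 1 then (-1 : ℂ) else 1) *
        ((∏ q ∈ α, if y q = 1 ∧ c q = true then Complex.I else 1) *
         (∏ q ∈ α, if y q = 1 ∧ c q = false then -Complex.I else 1) *
         (∏ q ∈ (Finset.univ : Finset Q),
            (if y q = 1 then if c q = true then ω else ω⁻¹ else 1))) := by
    rw [Finset.prod_congr rfl hsplit, Finset.prod_mul_distrib, hu, mul_one,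
      Finset.prod_mul_distrib, Finset.prod_mul_distrib, Finset.prod_mul_distrib,
      Finset.prod_ite_mem, Finset.prod_ite_mem, Finset.prod_ite_mem, Finset.univ_inter]
    ring
  rw [key]
  ring
end

section
/- Let Q be a finite type with a colouring c : Q → Bool, and let H₁ be the complex vector space of functions (Q → ZMod 2) → ℂ. If α ⊆ Q is a finset with N_w(α) = N_b(α) + 1 (as holds when X_α contains the support of a logical Z operator of the 3D colour code), then the transversal T gate satisfies T_Q ∘ X_α = exp(iπ/4) • (X_α ∘ Z_α ∘ A_α ∘ T_Q) as linear maps on H₁. -/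
/-! All operators but `X_α` are diagonal, with eigenvalues powers of `ω = exp(iπ/4)`: writing
`w_s(x), b_s(x)` for the numbers of white and black `q ∈ s` with `x q = 1`, the exponents are
`w_s − b_s` for `T_s`, `2(w_s − b_s)` for `A_s` and `4(w_s + b_s)` for `Z_s`. For `y = x + χ_α` one
has `w_Q(x) = w_Q(y) + N_w(α) − 2 w_α(y)`, and likewise for black, so the exponents of the two
sides differ by `N_w(α) − N_b(α) − 1 − 8 w_α(y) ≡ 0 (mod 8)`.
-/

open Finset Complex

local notation "ω" => Complex.exp (Real.pi * Complex.I / 4)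

lemma exp_pi_mul_I_div_four_pow_two : ω ^ 2 = I := by
  rw [← exp_nat_mul]
  convert exp_pi_div_two_mul_I using 2
  push_cast
  ring

lemma exp_pi_mul_I_div_four_pow_four : ω ^ 4 = -1 := by
  rw [show 4 = 2 * 2 by rfl, pow_mul, exp_pi_mul_I_div_four_pow_two, I_sq]

lemma zpow_exp_pi_mul_I_div_four_congr {a b : ℤ} (h : a ≡ b [ZMOD 8]) : ω ^ a = ω ^ b := by
  have h8 : ω ^ 8 = 1 := by
    rw [show 8 = 4 * 2 by rfl, pow_mul, exp_pi_mul_I_div_four_pow_four]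
    norm_num
  obtain ⟨m, hm⟩ := h.symm.dvd
  rw [show a = b + 8 * m by omega, zpow_add₀ (exp_ne_zero _), zpow_mul, zpow_ofNat, h8, one_zpow,
    mul_one]

section Counting

variable {Q : Type*}

def onesIn (s : Finset Q) (x : Q → ZMod 2) (p : Q → Prop) [DecidablePred p] : ℕ :=
  #{q ∈ s | x q = 1 ∧ p q}

lemma onesIn_union [DecidableEq Q] {s t : Finset Q} (h : Disjoint s t) (x : Q → ZMod 2)
    (p : Q → Prop) [DecidablePred p] :
    onesIn (s ∪ t) x p = onesIn s x p + onesIn t x p := by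
  rw [onesIn, filter_union, card_union_of_disjoint (disjoint_filter_filter h)]
  rfl

lemma card_filter_eq_one_eq_onesIn_add_onesIn (s : Finset Q) (x : Q → ZMod 2) (c : Q → Bool) :
    #{q ∈ s | x q = 1} = onesIn s x (c · = true) + onesIn s x (c · = false) := by
  rw [← card_filter_add_card_filter_not (s := {q ∈ s | x q = 1}) (fun q => c q = true),
    filter_filter, filter_filter]
  simp only [Bool.not_eq_true]
  rfl

variable [DecidableEq Q]

lemma onesIn_add_chi_of_disjoint {s α : Finset Q} (h : Disjoint s α) (x : Q → ZMod 2)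
    (p : Q → Prop) [DecidablePred p] :
    onesIn s (x + chi α) p = onesIn s x p := by
  unfold onesIn
  congr 1
  refine filter_congr fun q hq => ?_
  simp [chi, disjoint_left.mp h hq]

lemma onesIn_add_onesIn_add_chi (α : Finset Q) (x : Q → ZMod 2) (p : Q → Prop)
    [DecidablePred p] :
    onesIn α x p + onesIn α (x + chi α) p = #{q ∈ α | p q} := by
  have flip : ∀ a : ZMod 2, a + 1 = 1 ↔ ¬a = 1 := by decide
  have hshift : onesIn α (x + chi α) p = #{q ∈ {q ∈ α | p q} | ¬x q = 1} := by
    rw [onesIn, filter_filter]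
    congr 1
    refine filter_congr fun q hq => ?_
    simp [chi, hq, flip, and_comm]
  rw [hshift, ← card_filter_add_card_filter_not (s := {q ∈ α | p q}) (fun q => x q = 1), onesIn]
  simp only [filter_filter, and_comm]

lemma onesIn_univ_add_chi [Fintype Q] (α : Finset Q) (x : Q → ZMod 2) (p : Q → Prop)
    [DecidablePred p] :
    (onesIn univ x p : ℤ) =
      onesIn univ (x + chi α) p + #{q ∈ α | p q} - 2 * onesIn α (x + chi α) p := by
  have hsplit := fun y => onesIn_union (disjoint_compl_right (a := α)) y p
  rw [union_compl] at hsplit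
  have := onesIn_add_onesIn_add_chi α x p
  have := onesIn_add_chi_of_disjoint (disjoint_compl_left (a := α)) x p
  have := hsplit x
  have := hsplit (x + chi α)
  omega

end Counting

section Phases

variable {Q : Type*}

def tPhase (c : Q → Bool) (s : Finset Q) (x : Q → ZMod 2) : ℤ :=
  onesIn s x (c · = true) - onesIn s x (c · = false)

lemma Tgate_apply (c : Q → Bool) (s : Finset Q) (f : H1 Q) (x : Q → ZMod 2) :
    Tgate c s f x = ω ^ tPhase c s x * f x := by
  rw [Tgate, tPhase, ← exp_int_mul]
  congr 2
  push_cast [onesIn]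
  ring

lemma Aop_apply (c : Q → Bool) (s : Finset Q) (f : H1 Q) (x : Q → ZMod 2) :
    Aop c s f x = ω ^ (2 * tPhase c s x) * f x := by
  have hI (n : ℕ) : ω ^ (2 * (n : ℤ)) = I ^ n := by
    rw [zpow_mul, zpow_ofNat, exp_pi_mul_I_div_four_pow_two, zpow_natCast]
  rw [Aop, tPhase, mul_sub, zpow_sub₀ (exp_ne_zero _), hI, hI, div_eq_mul_inv, ← inv_pow,
    inv_I]
  rfl

lemma Zop_apply (c : Q → Bool) (s : Finset Q) (f : H1 Q) (x : Q → ZMod 2) :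
    Zop s f x = ω ^ (4 * ((onesIn s x (c · = true) : ℤ) + onesIn s x (c · = false))) * f x := by
  rw [Zop, card_filter_eq_one_eq_onesIn_add_onesIn s x c, zpow_mul, zpow_ofNat,
    exp_pi_mul_I_div_four_pow_four, ← Nat.cast_add, zpow_natCast]

lemma tPhase_univ_modEq [Fintype Q] [DecidableEq Q] (c : Q → Bool) (α : Finset Q)
    (h : Nw c α = Nb c α + 1) (x : Q → ZMod 2) :
    tPhase c univ x ≡ 1 + 4 * ((onesIn α (x + chi α) (c · = true) : ℤ) +
      onesIn α (x + chi α) (c · = false)) + 2 * tPhase c α (x + chi α) +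
      tPhase c univ (x + chi α) [ZMOD 8] := by
  have hw := onesIn_univ_add_chi α x (c · = true)
  have hb := onesIn_univ_add_chi α x (c · = false)
  unfold Nw Nb at h
  refine Int.modEq_iff_dvd.mpr ⟨onesIn α (x + chi α) (c · = true), ?_⟩
  simp only [tPhase]
  omega

end Phases

theorem stmt_17 {Q : Type*} [DecidableEq Q] [Fintype Q] (c : Q → Bool)
    (α : Finset Q) (h : Nw c α = Nb c α + 1) :
    Tgate c (Finset.univ : Finset Q) ∘ Xop α =
      Complex.exp ((Real.pi : ℂ) * Complex.I / 4) •
        (Xop α ∘ Zop α ∘ Aop c α ∘ Tgate c (Finset.univ : Finset Q)) := by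
  funext f x
  simp only [Function.comp_apply, Pi.smul_apply, smul_eq_mul, Xop, Zop_apply c, Aop_apply,
    Tgate_apply]
  rw [zpow_exp_pi_mul_I_div_four_congr (tPhase_univ_modEq c α h x)]
  simp only [zpow_add₀ (exp_ne_zero _), zpow_one]
  ring
end
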